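/- arXiv:2502.04652 — 2 statements merged into one kernel-verified Lean document; each statement's English description precedes it below -/
import Mathlib

section
/- Let Â = A + εB be a dual real n×n matrix with index of A equal to m, and let S = Σ_{i=1}^m A^{m-i} B A^{i-1}. Suppose the dual core-EP inverse Â^⊕ exists. Then Â^⊕ = A^⊕ − ε A^⊕ B A^⊕ if and only if (I − A^m (A^m)^†) S = O, where A^⊕ is the real core-EP inverse of A and (A^m)^† the Moore–Penrose inverse of A^m. -/
open Matrix

abbrev Mat (n : ℕ) := Matrix (Fin n) (Fin n) ℝ

/-- A dual matrix `A + ε B` represented as the pair `(A, B)`. -/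
abbrev DM (n : ℕ) := Mat n × Mat n

/-- Dual matrix multiplication: `(A+εB)(C+εD) = AC + ε(AD+BC)`. -/
def dmul {n : ℕ} (X Y : DM n) : DM n := (X.1 * Y.1, X.1 * Y.2 + X.2 * Y.1)

/-- Componentwise transpose of a dual matrix. -/
def dT {n : ℕ} (X : DM n) : DM n := (X.1ᵀ, X.2ᵀ)

/-- Powers of a dual matrix. -/
def dpow {n : ℕ} (X : DM n) : ℕ → DM n
  | 0 => (1, 0)
  | k+1 => dmul X (dpow X k)

/-- `m` is the index of `A`: the least `m` with `rank (A^(m+1)) = rank (A^m)`. -/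
def MatIndex {n : ℕ} (A : Mat n) (m : ℕ) : Prop :=
  (A ^ (m+1)).rank = (A ^ m).rank ∧ ∀ k < m, (A ^ (k+1)).rank ≠ (A ^ k).rank

/-- `X` is the core-EP inverse of `A` (with `m` the index of `A`). -/
def IsCEP {n : ℕ} (m : ℕ) (A X : Mat n) : Prop :=
  (A * X)ᵀ = A * X ∧ A * (X * X) = X ∧ X * A ^ (m+1) = A ^ m

/-- `Xh` is a dual core-EP inverse of the dual matrix `Ah`. -/
def IsDualCEP {n : ℕ} (m : ℕ) (Ah Xh : DM n) : Prop :=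
  dT (dmul Ah Xh) = dmul Ah Xh ∧ dmul Ah (dmul Xh Xh) = Xh ∧
    dmul Xh (dpow Ah (m+1)) = dpow Ah m

/-- `X` is the Moore-Penrose inverse of `M`. -/
def IsMP {n : ℕ} (M X : Mat n) : Prop :=
  M * X * M = M ∧ X * M * X = X ∧ (M * X)ᵀ = M * X ∧ (X * M)ᵀ = X * M

/-!
`A A^⊕` is a symmetric idempotent with the column space of `A^m`, hence equals `A^m (A^m)^†`;
and `rank A^(m+1) = rank A^m` lets one cancel `A^(m+1)` on the right, which makes core-EP
inverses unique. The `ε`-parts of the dual core-EP equations are affine in the `ε`-part `Y` of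
`Â^⊕`, and their homogeneous version forces `Y = 0`; so the dual core-EP inverse is unique
and the claim is that `(A^⊕, -A^⊕ B A^⊕)` solves the dual equations iff `(I - Q) S = 0`, where
`Q = A A^⊕`. The third equation reduces to `A^⊕ A S = S`, i.e. `Q S = S`. The first two reduce
to `(I - Q) B A^⊕ = 0`, which follows from `(I - Q) B A^m = 0`; and that comes from
`(I - Q) S = 0` because both `A S + B A^m` and `S A + A^m B` are the `ε`-part of `Â^(m+1)`.
-/

theorem Matrix.mul_eq_zero_of_rank_mul_eq {K l m n p : Type*} [Field K] [Fintype m] [Fintype n]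
    [Fintype p] {U : Matrix m n K} {V : Matrix n p K} (h : (U * V).rank = U.rank)
    {M : Matrix l m K} (hM : M * (U * V) = 0) : M * U = 0 := by
  have hrange : LinearMap.range (U * V).mulVecLin = LinearMap.range U.mulVecLin :=
    Submodule.eq_of_le_of_finrank_eq
      (by rw [mulVecLin_mul]; exact LinearMap.range_comp_le_range _ _) h
  refine ext_iff_mulVec.2 fun v => ?_
  obtain ⟨w, hw⟩ : U *ᵥ v ∈ LinearMap.range (U * V).mulVecLin :=
    hrange ▸ LinearMap.mem_range_self _ v
  rw [← mulVec_mulVec, ← hw, mulVecLin_apply, mulVec_mulVec, hM, zero_mulVec, zero_mulVec]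

theorem Matrix.mul_pow_eq_zero_of_rank_pow_succ_eq {K ι : Type*} [Field K] [Fintype ι]
    [DecidableEq ι] {A : Matrix ι ι K} {m : ℕ} (hrank : (A ^ (m + 1)).rank = (A ^ m).rank)
    {M : Matrix ι ι K} (hM : M * A ^ (m + 1) = 0) : M * A ^ m = 0 := by
  rw [pow_succ] at hrank hM
  exact mul_eq_zero_of_rank_mul_eq hrank hM

/-- Symmetric idempotents with the same column space as `M` coincide. -/
theorem Matrix.eq_of_transpose_eq_of_mul_eq {R ι κ : Type*} [CommSemiring R] [Fintype ι]
    [Fintype κ] {M : Matrix ι κ R} {Q Q' : Matrix ι ι R} {Z Z' : Matrix κ ι R}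
    (hQ : Qᵀ = Q) (hQ' : Q'ᵀ = Q') (hQM : Q * M = M) (hQ'M : Q' * M = M)
    (hQZ : Q = M * Z) (hQ'Z : Q' = M * Z') : Q = Q' := by
  have hQQ' : Q * Q' = Q' := by rw [hQ'Z, ← Matrix.mul_assoc, hQM]
  have hQ'Q : Q' * Q = Q := by rw [hQZ, ← Matrix.mul_assoc, hQ'M]
  rw [← hQ'Q, ← hQ, ← hQ', ← transpose_mul, hQQ', hQ']

theorem pow_mul_pow_succ_of_mul_mul_self {M : Type*} [Monoid M] {a x : M} (h : a * (x * x) = x)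
    (k : ℕ) : a ^ k * x ^ (k + 1) = x := by
  induction k with
  | zero => simp
  | succ k ih =>
    calc a ^ (k + 1) * x ^ (k + 2) = a ^ k * (a * (x * x)) * x ^ k := by
          rw [pow_succ a, pow_succ' x, pow_succ' x]; simp only [mul_assoc]
      _ = x := by rw [h, mul_assoc, ← pow_succ', ih]

section powDeriv

variable {R : Type*} [Semiring R]

def powDeriv (a b : R) (k : ℕ) : R := ∑ i ∈ Finset.range k, a ^ (k - 1 - i) * b * a ^ i

theorem powDeriv_succ (a b : R) (k : ℕ) :
    powDeriv a b (k + 1) = a * powDeriv a b k + b * a ^ k := by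
  rw [powDeriv, Finset.sum_range_succ, powDeriv, Finset.mul_sum, Nat.add_sub_cancel, Nat.sub_self,
    pow_zero, one_mul]
  congr 1
  refine Finset.sum_congr rfl fun i hi => ?_
  rw [show k - i = k - 1 - i + 1 by have := Finset.mem_range.1 hi; omega, pow_succ']
  simp only [mul_assoc]

theorem powDeriv_succ' (a b : R) (k : ℕ) :
    powDeriv a b (k + 1) = powDeriv a b k * a + a ^ k * b := by
  rw [powDeriv, Finset.sum_range_succ', powDeriv, Finset.sum_mul, Nat.add_sub_cancel, Nat.sub_zero,
    pow_zero, mul_one]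
  congr 1
  refine Finset.sum_congr rfl fun i hi => ?_
  rw [show k - (i + 1) = k - 1 - i by omega, pow_succ]
  simp only [mul_assoc]

end powDeriv

theorem dpow_eq {n : ℕ} (A B : Mat n) (k : ℕ) : dpow (A, B) k = (A ^ k, powDeriv A B k) := by
  induction k with
  | zero => simp [dpow, powDeriv]
  | succ k ih => rw [dpow, ih, dmul, powDeriv_succ, pow_succ']

theorem isDualCEP_mk_iff {n m : ℕ} {A B X Y : Mat n} :
    IsDualCEP m (A, B) (X, Y) ↔ IsCEP m A X ∧ (A * Y + B * X)ᵀ = A * Y + B * X ∧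
      A * (X * Y + Y * X) + B * (X * X) = Y ∧
      X * powDeriv A B (m + 1) + Y * A ^ (m + 1) = powDeriv A B m := by
  simp only [IsDualCEP, IsCEP, dmul, dT, dpow_eq, Prod.ext_iff]
  tauto

namespace IsCEP

variable {n m : ℕ} {A X : Mat n}

theorem pow_mul_pow_succ (h : IsCEP m A X) (k : ℕ) : A ^ k * X ^ (k + 1) = X :=
  pow_mul_pow_succ_of_mul_mul_self h.2.1 k

theorem mul_mul_pow (h : IsCEP m A X) : A * X * A ^ m = A ^ m := by
  obtain ⟨-, h2, h3⟩ := h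
  calc A * X * A ^ m = A * (X * X) * A ^ (m + 1) := by rw [← h3]; simp only [mul_assoc]
    _ = A ^ m := by rw [h2, h3]

theorem mul_eq_pow_mul (h : IsCEP m A X) : A * X = A ^ m * (A * X ^ (m + 1)) := by
  rw [← mul_assoc, ← pow_succ, pow_succ', mul_assoc, h.pow_mul_pow_succ]

theorem mul_mul_self (h : IsCEP m A X) : X * (A * X) = X :=
  calc X * (A * X) = X * (A * (A ^ m * X ^ (m + 1))) := by rw [h.pow_mul_pow_succ]
    _ = X * A ^ (m + 1) * X ^ (m + 1) := by rw [pow_succ' A]; simp only [mul_assoc]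
    _ = X := by rw [h.2.2, h.pow_mul_pow_succ]

theorem mul_mul_of_mul_mul_eq (h : IsCEP m A X) {M : Mat n} (hM : A * X * M = M) :
    X * (A * M) = M :=
  calc X * (A * M) = X * (A * (A ^ m * (A * X ^ (m + 1)) * M)) := by
        rw [← h.mul_eq_pow_mul, hM]
    _ = X * A ^ (m + 1) * (A * X ^ (m + 1)) * M := by rw [pow_succ' A]; simp only [mul_assoc]
    _ = M := by rw [h.2.2, ← h.mul_eq_pow_mul, hM]

theorem mul_eq_of_isMP (h : IsCEP m A X) {P : Mat n} (hP : IsMP (A ^ m) P) : A * X = A ^ m * P :=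
  eq_of_transpose_eq_of_mul_eq h.1 hP.2.2.1 h.mul_mul_pow hP.1 h.mul_eq_pow_mul rfl

theorem unique (hrank : (A ^ (m + 1)).rank = (A ^ m).rank) (h : IsCEP m A X) {X' : Mat n}
    (h' : IsCEP m A X') : X = X' := by
  have hAX : A * X = A * X' := eq_of_transpose_eq_of_mul_eq h.1 h'.1 h.mul_mul_pow h'.mul_mul_pow
    h.mul_eq_pow_mul h'.mul_eq_pow_mul
  have hdiff : (X - X') * A ^ m = 0 :=
    Matrix.mul_pow_eq_zero_of_rank_pow_succ_eq hrank (by rw [sub_mul, h.2.2, h'.2.2, sub_self])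
  calc X = X * (A * X) - (X - X') * A ^ m * (A * X ^ (m + 1)) := by
        rw [hdiff, zero_mul, sub_zero, h.mul_mul_self]
    _ = X' := by
        rw [mul_assoc, ← h.mul_eq_pow_mul, sub_mul, sub_sub_cancel, hAX, h'.mul_mul_self]

/-- The homogeneous `ε`-part of the dual core-EP equations has only the trivial solution. -/
theorem eq_zero_of_dual (hrank : (A ^ (m + 1)).rank = (A ^ m).rank) (h : IsCEP m A X) {D : Mat n}
    (hD1 : (A * D)ᵀ = A * D) (hD2 : A * (X * D + D * X) = D) (hD3 : D * A ^ (m + 1) = 0) :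
    D = 0 := by
  have hDQ : D * (A * X) = 0 := by
    rw [h.mul_eq_pow_mul, ← mul_assoc, Matrix.mul_pow_eq_zero_of_rank_pow_succ_eq hrank hD3,
      zero_mul]
  have hDX : D * X = 0 := by
    rw [← h.2.1, ← mul_assoc, ← mul_assoc, mul_assoc D, hDQ, zero_mul]
  have hQD : A * X * D = D := by rwa [hDX, add_zero, ← mul_assoc] at hD2
  have hQAD : A * X * (A * D) = 0 := by
    rw [← transpose_transpose (A * X * (A * D)), transpose_mul, hD1, h.1, mul_assoc, hDQ,
      mul_zero, transpose_zero]
  calc D = X * (A * X * (A * D)) := by rw [← mul_assoc, ← mul_assoc, h.mul_mul_self, mul_assoc,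
        h.mul_mul_of_mul_mul_eq hQD]
    _ = 0 := by rw [hQAD, mul_zero]

end IsCEP

theorem IsDualCEP.unique {n m : ℕ} {A B : Mat n} (hrank : (A ^ (m + 1)).rank = (A ^ m).rank)
    {Xh Xh' : DM n} (h : IsDualCEP m (A, B) Xh) (h' : IsDualCEP m (A, B) Xh') : Xh = Xh' := by
  obtain ⟨X, Y⟩ := Xh
  obtain ⟨X', Y'⟩ := Xh'
  obtain ⟨hX, h1, h2, h3⟩ := isDualCEP_mk_iff.1 h
  obtain ⟨hX', h1', h2', h3'⟩ := isDualCEP_mk_iff.1 h'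
  obtain rfl : X = X' := hX.unique hrank hX'
  have hY : Y - Y' = 0 := by
    refine hX.eq_zero_of_dual hrank ?_ ?_ ?_
    · rw [show A * (Y - Y') = (A * Y + B * X) - (A * Y' + B * X) by noncomm_ring, transpose_sub,
        h1, h1']
    · rw [show A * (X * (Y - Y') + (Y - Y') * X) =
          (A * (X * Y + Y * X) + B * (X * X)) - (A * (X * Y' + Y' * X) + B * (X * X)) by
          noncomm_ring, h2, h2']
    · rw [sub_mul, ← add_right_inj (X * powDeriv A B (m + 1)), add_zero, ← add_sub_assoc, h3,
        ← h3', add_sub_cancel_right]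
  rw [sub_eq_zero.1 hY]

theorem IsCEP.mul_mul_mul_eq_of_sub_mul_powDeriv_eq_zero {n m : ℕ} {A B X : Mat n}
    (h : IsCEP m A X) (hRS : (1 - A * X) * powDeriv A B m = 0) : A * X * (B * X) = B * X := by
  have hQS : A * X * powDeriv A B m = powDeriv A B m := by
    rw [sub_mul, one_mul, sub_eq_zero] at hRS
    exact hRS.symm
  have hRpow : (1 - A * X) * A ^ m = 0 := by rw [sub_mul, one_mul, h.mul_mul_pow, sub_self]
  have hRAQ : (1 - A * X) * (A * (A * X)) = 0 := by
    rw [show A * (A * X) = A ^ m * (A * (A * X ^ (m + 1))) by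
        rw [h.mul_eq_pow_mul]; simp only [← mul_assoc, ← pow_succ, ← pow_succ'],
      ← mul_assoc, hRpow, zero_mul]
  have hRBA : (1 - A * X) * (B * A ^ m) = 0 :=
    calc (1 - A * X) * (B * A ^ m)
        = (1 - A * X) * (A * powDeriv A B m + B * A ^ m) -
            (1 - A * X) * (A * (A * X)) * powDeriv A B m := by
          rw [mul_assoc _ _ (powDeriv A B m), mul_assoc A, hQS]; noncomm_ring
      _ = (1 - A * X) * powDeriv A B m * A + (1 - A * X) * A ^ m * B -
            (1 - A * X) * (A * (A * X)) * powDeriv A B m := by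
          rw [← powDeriv_succ, powDeriv_succ']; noncomm_ring
      _ = 0 := by rw [hRS, hRpow, hRAQ]; simp
  have hRBX : (1 - A * X) * (B * X) = 0 :=
    calc (1 - A * X) * (B * X) = (1 - A * X) * (B * A ^ m) * X ^ (m + 1) := by
          rw [mul_assoc _ (B * A ^ m), mul_assoc B, h.pow_mul_pow_succ]
      _ = 0 := by rw [hRBA, zero_mul]
  rw [sub_mul, one_mul, sub_eq_zero] at hRBX
  exact hRBX.symm

theorem IsCEP.isDualCEP_iff {n m : ℕ} {A B X : Mat n} (h : IsCEP m A X) :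
    IsDualCEP m (A, B) (X, -(X * B * X)) ↔ (1 - A * X) * powDeriv A B m = 0 := by
  have h3 : X * powDeriv A B (m + 1) + -(X * B * X) * A ^ (m + 1) = X * (A * powDeriv A B m) := by
    rw [powDeriv_succ, neg_mul, mul_assoc (X * B), h.2.2]
    noncomm_ring
  rw [isDualCEP_mk_iff, h3]
  constructor
  · rintro ⟨-, -, -, hS⟩
    have hRX : (1 - A * X) * X = 0 := by rw [sub_mul, one_mul, mul_assoc, h.2.1, sub_self]
    rw [← hS, ← mul_assoc, hRX, zero_mul]
  · intro hRS
    have hQS : A * X * powDeriv A B m = powDeriv A B m := by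
      rw [sub_mul, one_mul, sub_eq_zero] at hRS
      exact hRS.symm
    have hQBX := h.mul_mul_mul_eq_of_sub_mul_powDeriv_eq_zero hRS
    refine ⟨h, ?_, ?_, h.mul_mul_of_mul_mul_eq hQS⟩
    · rw [show A * -(X * B * X) + B * X = B * X - A * X * (B * X) by noncomm_ring, hQBX, sub_self,
        transpose_zero]
    · rw [show A * (X * -(X * B * X) + -(X * B * X) * X) + B * (X * X) =
          -(A * (X * X) * (B * X)) - A * X * (B * X) * X + B * (X * X) by noncomm_ring, h.2.1, hQBX]
      noncomm_ring

theorem stmt9 {n m : ℕ} (A B : Mat n) (hm : MatIndex A m)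
    (S : Mat n) (hS : S = ∑ i ∈ Finset.range m, A ^ (m - 1 - i) * B * A ^ i)
    (Ac : Mat n) (hAc : IsCEP m A Ac)
    (P : Mat n) (hP : IsMP (A ^ m) P)
    (Xh : DM n) (hXh : IsDualCEP m (A, B) Xh) :
    Xh = (Ac, -(Ac * B * Ac)) ↔ (1 - A ^ m * P) * S = 0 := by
  rw [hS, ← powDeriv, ← hAc.mul_eq_of_isMP hP, ← hAc.isDualCEP_iff]
  exact ⟨fun h => h ▸ hXh, IsDualCEP.unique hm.1 hXh⟩
end

section
/- Let Â = A + εB be a dual real n×n matrix with index of A equal to m, such that the dual core-EP inverse exists and equals A^⊕ − ε A^⊕ B A^⊕. Then for any dual vector b̂, the equation Â Â^⊕ x̂ = Â^⊕ b̂ has a unique solution x̂ in the dual range R(Â^m), namely x̂ = Â^⊕ b̂. -/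
/-!
Write `X̂ = A^⊕ - ε A^⊕ B A^⊕` for the dual core-EP inverse of `Â`. From `Â X̂² = X̂` one gets
`X̂ = Â^m X̂^(m+1)`, so `R(X̂) ⊆ R(Â^m)`, and from `X̂ Â^(m+1) = Â^m` one gets `R(Â^m) ⊆ R(X̂)`.
The projector `Â X̂` fixes `R(X̂) = R(Â^m)` pointwise, because `Â X̂ X̂ = X̂`. Hence `X̂ b̂` solves
the equation, and any solution `x̂ ∈ R(Â^m)` satisfies `x̂ = Â X̂ x̂ = X̂ b̂`.
-/

open Matrix

/-- A dual vector `x + ε x₀` represented as the pair `(x, x₀)`. -/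
abbrev DV (n : ℕ) := (Fin n → ℝ) × (Fin n → ℝ)

/-- Action of a dual matrix on a dual vector. -/
def dmulVec {n : ℕ} (M : DM n) (x : DV n) : DV n :=
  (M.1.mulVec x.1, M.1.mulVec x.2 + M.2.mulVec x.1)

/-- Dual range of a dual matrix. -/
def DRange {n : ℕ} (M : DM n) : Set (DV n) :=
  {y | ∃ z w : Fin n → ℝ, y = (M.1.mulVec z, M.1.mulVec w + M.2.mulVec z)}

section DualMatrix

variable {n : ℕ}

lemma dmul_assoc (X Y Z : DM n) : dmul (dmul X Y) Z = dmul X (dmul Y Z) := by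
  simp only [dmul, mul_add, add_mul, mul_assoc]
  abel_nf

lemma dmul_one (X : DM n) : dmul X (1, 0) = X := by
  simp [dmul]

lemma one_dmul (X : DM n) : dmul (1, 0) X = X := by
  simp [dmul]

lemma dpow_succ' (X : DM n) (k : ℕ) : dpow X (k + 1) = dmul (dpow X k) X := by
  induction k with
  | zero => simp only [dpow, dmul_one, one_dmul]
  | succ k ih => rw [dpow, ih, ← dmul_assoc, ← dpow, ih]

lemma dmulVec_dmul (M N : DM n) (x : DV n) :
    dmulVec (dmul M N) x = dmulVec M (dmulVec N x) := by
  simp only [dmul, dmulVec, add_mulVec, mulVec_add, ← mulVec_mulVec]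
  abel_nf

lemma mem_DRange_iff {M : DM n} {y : DV n} : y ∈ DRange M ↔ ∃ u : DV n, y = dmulVec M u := by
  constructor
  · rintro ⟨z, w, rfl⟩
    exact ⟨(z, w), rfl⟩
  · rintro ⟨u, rfl⟩
    exact ⟨u.1, u.2, rfl⟩

lemma dmulVec_mem_DRange (M : DM n) (u : DV n) : dmulVec M u ∈ DRange M :=
  mem_DRange_iff.2 ⟨u, rfl⟩

lemma DRange_dmul_subset (M N : DM n) : DRange (dmul M N) ⊆ DRange M := by
  intro y hy
  obtain ⟨u, rfl⟩ := mem_DRange_iff.1 hy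
  rw [dmulVec_dmul]
  exact dmulVec_mem_DRange M _

end DualMatrix

section SquareIdentity

variable {n : ℕ} {A X : DM n}

lemma dmul_dpow_dpow_succ_of_dmul_sq_eq (hX : dmul A (dmul X X) = X) (k : ℕ) :
    dmul (dpow A k) (dpow X (k + 1)) = X := by
  induction k with
  | zero => simp only [dpow, one_dmul, dmul_one]
  | succ k ih =>
    rw [dpow, dpow_succ' X (k + 1), dmul_assoc, ← dmul_assoc (dpow A k), ih, hX]

lemma DRange_subset_DRange_dpow_of_dmul_sq_eq (hX : dmul A (dmul X X) = X) (k : ℕ) :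
    DRange X ⊆ DRange (dpow A k) := by
  rw [← dmul_dpow_dpow_succ_of_dmul_sq_eq hX k]
  exact DRange_dmul_subset _ _

lemma dmulVec_dmul_eq_self_of_dmul_sq_eq (hX : dmul A (dmul X X) = X) {y : DV n}
    (hy : y ∈ DRange X) : dmulVec (dmul A X) y = y := by
  obtain ⟨u, rfl⟩ := mem_DRange_iff.1 hy
  rw [← dmulVec_dmul, dmul_assoc, hX]

end SquareIdentity

theorem stmt19_general {n m : ℕ} (A B : Mat n)
    (Ac : Mat n)
    (hXh : IsDualCEP m (A, B) (Ac, -(Ac * B * Ac))) :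
    ∀ b : DV n,
      dmulVec (dmul (A, B) (Ac, -(Ac * B * Ac)))
          (dmulVec ((Ac, -(Ac * B * Ac)) : DM n) b) =
        dmulVec ((Ac, -(Ac * B * Ac)) : DM n) b ∧
      dmulVec ((Ac, -(Ac * B * Ac)) : DM n) b ∈ DRange (dpow (A, B) m) ∧
      ∀ x ∈ DRange (dpow (A, B) m),
        dmulVec (dmul (A, B) (Ac, -(Ac * B * Ac))) x =
            dmulVec ((Ac, -(Ac * B * Ac)) : DM n) b →
          x = dmulVec ((Ac, -(Ac * B * Ac)) : DM n) b := by
  obtain ⟨-, hOuter, hPow⟩ := hXh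
  have hRange : DRange (dpow (A, B) m) ⊆ DRange (Ac, -(Ac * B * Ac)) := by
    rw [← hPow]
    exact DRange_dmul_subset _ _
  intro b
  have hb := dmulVec_mem_DRange (Ac, -(Ac * B * Ac)) b
  refine ⟨dmulVec_dmul_eq_self_of_dmul_sq_eq hOuter hb,
    DRange_subset_DRange_dpow_of_dmul_sq_eq hOuter m hb, fun x hx hEq => ?_⟩
  rw [← hEq, dmulVec_dmul_eq_self_of_dmul_sq_eq hOuter (hRange hx)]

theorem stmt19 {n m : ℕ} (A B : Mat n) (hm : MatIndex A m)
    (Ac : Mat n) (hAc : IsCEP m A Ac)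
    (hXh : IsDualCEP m (A, B) (Ac, -(Ac * B * Ac))) :
    ∀ b : DV n,
      dmulVec (dmul (A, B) (Ac, -(Ac * B * Ac)))
          (dmulVec ((Ac, -(Ac * B * Ac)) : DM n) b) =
        dmulVec ((Ac, -(Ac * B * Ac)) : DM n) b ∧
      dmulVec ((Ac, -(Ac * B * Ac)) : DM n) b ∈ DRange (dpow (A, B) m) ∧
      ∀ x ∈ DRange (dpow (A, B) m),
        dmulVec (dmul (A, B) (Ac, -(Ac * B * Ac))) x =
            dmulVec ((Ac, -(Ac * B * Ac)) : DM n) b →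
          x = dmulVec ((Ac, -(Ac * B * Ac)) : DM n) b :=
  stmt19_general A B Ac hXh
end
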